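/- Let f ∈ H and let p_1, …, p_n ∈ E be points whose Gram matrix A_n is positive definite. Let F_n ∈ ℂ^n be the vector with entries (F_n)_j = ⟨f, h(p_j)⟩. Then ‖f − f*_{A_n}‖² = ‖f‖² − conj(F_n) · A_n^{-1} · F_nᵀ (where conj(F_n) · A_n^{-1} · F_nᵀ = Σ_{j,k} conj((F_n)_j) (A_n^{-1})_{j,k} (F_n)_k, a nonnegative real number). -/

import Mathlib

/-!
Write `v = h ∘ p`, `G` for its Gram matrix, `B = G⁻¹` and `F = (⟪v j, f⟫)_j`. Then
`f* = ∑ (B F)_k v_k`, and since `B` is Hermitian with `B G B = B`, both `⟪f*, f⟫` and `⟪f*, f*⟫`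
equal `F^* B F`. Hence `f - f*` is orthogonal to `f*`, and Pythagoras gives
`‖f - f*‖² = ‖f‖² - ⟪f*, f*⟫ = ‖f‖² - F^* B F`.
-/

open Matrix

namespace Matrix

variable {n α : Type*} [Fintype n] [DecidableEq n] [CommRing α]

theorem nonsing_inv_mul_mul_nonsing_inv (A : Matrix n n α) : A⁻¹ * A * A⁻¹ = A⁻¹ := by
  rcases nonsing_inv_cancel_or_zero A with ⟨h, -⟩ | h
  · rw [h, Matrix.one_mul]
  · rw [h, Matrix.zero_mul, Matrix.zero_mul]

end Matrix

section Approximation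

open scoped InnerProductSpace

variable {𝕜 E ι : Type*} [RCLike 𝕜] [NormedAddCommGroup E] [InnerProductSpace 𝕜 E]

theorem norm_sub_sq_eq_of_inner_eq_inner_self {x f : E} (h : ⟪x, f⟫_𝕜 = ⟪x, x⟫_𝕜) :
    (‖f - x‖ : 𝕜) ^ 2 = (‖f‖ : 𝕜) ^ 2 - ⟪x, x⟫_𝕜 := by
  have horth : ⟪f - x, x⟫_𝕜 = 0 := by
    rw [← inner_conj_symm, inner_sub_right, h, sub_self, map_zero]
  rw [← inner_self_eq_norm_sq_to_K, ← inner_self_eq_norm_sq_to_K, inner_sub_right, horth,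
    sub_zero, inner_sub_left, h]

variable [Fintype ι]

theorem sum_smul_inner_eq_star_dotProduct {v : ι → E} {f : E} {F : ι → 𝕜}
    (hF : ∀ i, F i = ⟪v i, f⟫_𝕜) (c : ι → 𝕜) :
    ⟪∑ i, c i • v i, f⟫_𝕜 = star c ⬝ᵥ F := by
  simp only [sum_inner, inner_smul_left, dotProduct, hF, Pi.star_apply, RCLike.star_def]

theorem norm_sub_sum_mulVec_smul_sq {v : ι → E} {f : E} {F : ι → 𝕜}
    (hF : ∀ i, F i = ⟪v i, f⟫_𝕜) {B : Matrix ι ι 𝕜} (hB : B.IsHermitian)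
    (hBGB : B * gram 𝕜 v * B = B) :
    (‖f - ∑ i, (B *ᵥ F) i • v i‖ : 𝕜) ^ 2 = (‖f‖ : 𝕜) ^ 2 - star F ⬝ᵥ B *ᵥ F := by
  have hstar : star (B *ᵥ F) = star F ᵥ* B := by
    rw [star_mulVec, hB.eq]
  have hcross : ⟪∑ i, (B *ᵥ F) i • v i, f⟫_𝕜 = star F ⬝ᵥ B *ᵥ F := by
    rw [sum_smul_inner_eq_star_dotProduct hF, hstar, dotProduct_mulVec]
  have hself : ⟪∑ i, (B *ᵥ F) i • v i, ∑ i, (B *ᵥ F) i • v i⟫_𝕜 = star F ⬝ᵥ B *ᵥ F := by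
    rw [← star_dotProduct_gram_mulVec, hstar, dotProduct_mulVec, vecMul_vecMul, ← dotProduct_mulVec,
      mulVec_mulVec, hBGB]
  rw [norm_sub_sq_eq_of_inner_eq_inner_self (hcross.trans hself.symm), hself]

end Approximation

open scoped ComplexInnerProductSpace ComplexOrder

theorem stmt2 {H : Type*} [NormedAddCommGroup H] [InnerProductSpace ℂ H]
    {E : Type*} (h : E → H) (n : ℕ) (p : Fin n → E) (f : H)
    (A : Matrix (Fin n) (Fin n) ℂ)
    (hA : ∀ j k, A j k = ⟪h (p j), h (p k)⟫)
    (F : Fin n → ℂ) (hF : ∀ j, F j = ⟪h (p j), f⟫)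
    (fstar : H)
    (hfstar : fstar = ∑ j : Fin n, ∑ k : Fin n,
      (⟪h (p j), f⟫ * (starRingEnd ℂ) (A⁻¹ j k)) • h (p k)) :
    (‖f - fstar‖ : ℂ) ^ 2 =
      (‖f‖ : ℂ) ^ 2 - ∑ j : Fin n, ∑ k : Fin n, (starRingEnd ℂ) (F j) * A⁻¹ j k * F k := by
  obtain rfl : A = gram ℂ (h ∘ p) := Matrix.ext hA
  set G := gram ℂ (h ∘ p)
  have hB : G⁻¹.IsHermitian := (isHermitian_gram ℂ _).inv
  have hfstar' : fstar = ∑ k, (G⁻¹ *ᵥ F) k • h (p k) := by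
    simp only [hfstar, ← hF]
    rw [Finset.sum_comm]
    refine Finset.sum_congr rfl fun k _ => ?_
    rw [← Finset.sum_smul]
    congr 1
    simp only [mulVec, dotProduct]
    refine Finset.sum_congr rfl fun j _ => ?_
    rw [← hB.apply k j, mul_comm]
    rfl
  have hquad : ∑ j, ∑ k, (starRingEnd ℂ) (F j) * G⁻¹ j k * F k = star F ⬝ᵥ G⁻¹ *ᵥ F := by
    simp only [dotProduct, mulVec, Finset.mul_sum, mul_assoc, Pi.star_apply, RCLike.star_def]
  rw [hfstar', hquad]
  exact norm_sub_sum_mulVec_smul_sq (v := h ∘ p) hF hB (nonsing_inv_mul_mul_nonsing_inv _)
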